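/- If L, M ∈ ℝ^{Nd×Nd} are block lower triangular and dist_AW(L, M) = 0, then LLᵀ = MMᵀ. -/

import Mathlib

open Matrix BigOperators Classical

/-- Squared Frobenius norm. -/
def frobSq {m n : Type*} [Fintype m] [Fintype n] (C : Matrix m n ℝ) : ℝ :=
  ∑ i, ∑ j, (C i j) ^ 2

/-- Frobenius norm. -/
noncomputable def frobNorm {m n : Type*} [Fintype m] [Fintype n]
    (C : Matrix m n ℝ) : ℝ :=
  Real.sqrt (frobSq C)

/-- Square root of a positive semidefinite matrix (junk value `0` otherwise). -/
noncomputable def psdSqrt {n : Type*} [Fintype n] [DecidableEq n]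
    (A : Matrix n n ℝ) : Matrix n n ℝ :=
  if h : A.PosSemidef then
    (h.1.eigenvectorUnitary : Matrix n n ℝ) *
      diagonal ((↑) ∘ Real.sqrt ∘ h.1.eigenvalues) *
      (star h.1.eigenvectorUnitary : Matrix n n ℝ)
  else 0

/-- Nuclear norm: `‖C‖₊ = tr((CᵀC)^{1/2})`, the sum of the singular values. -/
noncomputable def nuclearNorm {m n : Type*} [Fintype m] [Fintype n] [DecidableEq n]
    (C : Matrix m n ℝ) : ℝ :=
  (psdSqrt (Cᵀ * C)).trace

/-- Squared Bures–Wasserstein distance: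
`dist_BW²(A,B) = tr A + tr B − 2 tr((A^{1/2} B A^{1/2})^{1/2})`. -/
noncomputable def distBWsq {n : Type*} [Fintype n] [DecidableEq n]
    (A B : Matrix n n ℝ) : ℝ :=
  A.trace + B.trace - 2 * (psdSqrt (psdSqrt A * B * psdSqrt A)).trace

variable {N d : ℕ}

/-- `L` is block lower triangular: all `d×d` blocks `L_{s,t}` with `s < t` vanish. -/
def BlockLowerTri (L : Matrix (Fin N × Fin d) (Fin N × Fin d) ℝ) : Prop :=
  ∀ s t : Fin N, s < t → ∀ i j : Fin d, L (s, i) (t, j) = 0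

/-- The `t`-th `d×d` diagonal block of a matrix. -/
def diagBlock (A : Matrix (Fin N × Fin d) (Fin N × Fin d) ℝ) (t : Fin N) :
    Matrix (Fin d) (Fin d) ℝ :=
  fun i j => A (t, i) (t, j)

/-- The `t`-th column block `L_{·,t} ∈ ℝ^{Nd×d}` of `L`. -/
def colBlock (L : Matrix (Fin N × Fin d) (Fin N × Fin d) ℝ) (t : Fin N) :
    Matrix (Fin N × Fin d) (Fin d) ℝ :=
  fun p j => L p (t, j)

/-- Block diagonal matrix built from `d×d` blocks `Q₁, …, Q_N`. -/
def blockDiag (Q : Fin N → Matrix (Fin d) (Fin d) ℝ) :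
    Matrix (Fin N × Fin d) (Fin N × Fin d) ℝ :=
  fun p q => if p.1 = q.1 then Q q.1 p.2 q.2 else 0

/-- Squared adapted Wasserstein pseudo-distance between Cholesky factors:
`dist_AW²(L,M) = ‖L‖_F² + ‖M‖_F² − 2 ∑_t ‖(LᵀM)_{t,t}‖₊`. -/
noncomputable def distAWsq (L M : Matrix (Fin N × Fin d) (Fin N × Fin d) ℝ) : ℝ :=
  frobSq L + frobSq M - 2 * ∑ t : Fin N, nuclearNorm (diagBlock (Lᵀ * M) t)

/-- Adapted Wasserstein pseudo-distance. -/
noncomputable def distAW (L M : Matrix (Fin N × Fin d) (Fin N × Fin d) ℝ) : ℝ :=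
  Real.sqrt (distAWsq L M)

/-!
Write `L_t`, `M_t` for the `t`-th column blocks. A polar decomposition `L_tᵀ M_t = Q_t |L_tᵀ M_t|`
gives an orthogonal `S_t = Q_tᵀ` with `‖L_t - M_t S_t‖_F² = ‖L_t‖_F² + ‖M_t‖_F² - 2 ‖L_tᵀ M_t‖₊`,
so `dist_AW(L, M)² = ∑_t ‖L_t - M_t S_t‖_F²`. If it vanishes, then `L_t = M_t S_t` for every `t`,
hence `L Lᵀ = ∑_t L_t L_tᵀ = ∑_t M_t M_tᵀ = M Mᵀ`.
-/

open scoped MatrixOrder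

theorem LinearMap.exists_linearIsometryEquiv_comp_eq_of_norm_eq {𝕜 E V : Type*} [RCLike 𝕜]
    [AddCommGroup E] [Module 𝕜 E] [NormedAddCommGroup V] [InnerProductSpace 𝕜 V]
    [FiniteDimensional 𝕜 V] (p c : E →ₗ[𝕜] V) (h : ∀ x, ‖p x‖ = ‖c x‖) :
    ∃ U : V ≃ₗᵢ[𝕜] V, ∀ x, U (p x) = c x := by
  have hker : ker p ≤ ker c := fun x hx ↦ by
    rwa [mem_ker, ← norm_eq_zero, ← h, norm_eq_zero]
  let ψ : range p →ₗ[𝕜] V := (ker p).liftQ c hker ∘ₗ p.quotKerEquivRange.symm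
  have hψ : ∀ x, ψ ⟨p x, mem_range_self p x⟩ = c x := fun x ↦ by
    simp [ψ, quotKerEquivRange_symm_apply_image]
  have hψ_norm : ∀ y, ‖ψ y‖ = ‖y‖ := by
    rintro ⟨_, x, rfl⟩
    rw [hψ, ← h]
    rfl
  refine ⟨(LinearIsometry.extend ⟨ψ, hψ_norm⟩).toLinearIsometryEquiv rfl, fun x ↦ ?_⟩
  exact (LinearIsometry.extend_apply _ ⟨p x, mem_range_self p x⟩).trans (hψ x)

namespace Matrix

theorem exists_mem_unitaryGroup_mul_eq {𝕜 n : Type*} [RCLike 𝕜] [Fintype n] [DecidableEq n]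
    {P C : Matrix n n 𝕜} (h : star P * P = star C * C) :
    ∃ Q ∈ unitaryGroup n 𝕜, Q * P = C := by
  have hnorm : ∀ x, ‖toEuclideanLin P x‖ = ‖toEuclideanLin C x‖ := by
    intro x
    have hnorm_sq : ∀ A : Matrix n n 𝕜, ‖toEuclideanLin A x‖ ^ 2 =
        RCLike.re (inner 𝕜 (toEuclideanCLM (𝕜 := 𝕜) (star A * A) x) x) := fun A ↦ by
      rw [map_mul, map_star, ContinuousLinearMap.star_eq_adjoint]
      exact (toEuclideanCLM (𝕜 := 𝕜) A).apply_norm_sq_eq_inner_adjoint_left x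
    rw [← sq_eq_sq₀ (norm_nonneg _) (norm_nonneg _), hnorm_sq, hnorm_sq, h]
  obtain ⟨U, hU⟩ := LinearMap.exists_linearIsometryEquiv_comp_eq_of_norm_eq _ _ hnorm
  let u := Unitary.linearIsometryEquiv.symm U
  refine ⟨(toEuclideanCLM (n := n) (𝕜 := 𝕜)).symm u, Unitary.map_mem _ u.2,
    EquivLike.injective (toEuclideanCLM (n := n) (𝕜 := 𝕜)) ?_⟩
  rw [map_mul, StarAlgEquiv.apply_symm_apply]
  ext1 x
  exact hU x

theorem exists_mem_unitaryGroup_mul_abs_eq {𝕜 n : Type*} [RCLike 𝕜] [Fintype n]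
    [DecidableEq n] (C : Matrix n n 𝕜) : ∃ Q ∈ unitaryGroup n 𝕜, Q * CFC.abs C = C :=
  exists_mem_unitaryGroup_mul_eq <| by
    rw [(CFC.abs_nonneg C).isSelfAdjoint.star_eq, CFC.abs_mul_abs]

end Matrix

lemma psdSqrt_eq_sqrt {n : Type*} [Fintype n] [DecidableEq n] {A : Matrix n n ℝ}
    (hA : A.PosSemidef) : psdSqrt A = CFC.sqrt A := by
  rw [psdSqrt, dif_pos hA, CFC.sqrt_eq_real_sqrt A hA.nonneg, cfcₙ_eq_cfc, hA.1.cfc_eq,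
    IsHermitian.cfc, Unitary.conjStarAlgAut_apply]
  rfl

lemma nuclearNorm_eq_trace_abs {n : Type*} [Fintype n] [DecidableEq n] (C : Matrix n n ℝ) :
    nuclearNorm C = (CFC.abs C).trace := by
  rw [nuclearNorm, CFC.abs, ← conjTranspose_eq_transpose_of_trivial, ← star_eq_conjTranspose,
    psdSqrt_eq_sqrt (star_mul_self_nonneg C).posSemidef]

section frobSq

variable {m n : Type*} [Fintype m] [Fintype n]

lemma frobSq_nonneg (A : Matrix m n ℝ) : 0 ≤ frobSq A := by
  unfold frobSq
  positivity

lemma frobSq_eq_zero_iff {A : Matrix m n ℝ} : frobSq A = 0 ↔ A = 0 := by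
  rw [frobSq, Finset.sum_eq_zero_iff_of_nonneg fun i _ ↦ by positivity]
  simp_rw [Finset.sum_eq_zero_iff_of_nonneg fun j _ ↦ sq_nonneg (A _ j)]
  simp [← Matrix.ext_iff]

lemma frobSq_eq_trace (A : Matrix m n ℝ) : frobSq A = (Aᵀ * A).trace := by
  simp only [frobSq, trace, diag, mul_apply, transpose_apply, sq]
  exact Finset.sum_comm

lemma frobSq_sub (A B : Matrix m n ℝ) :
    frobSq (A - B) = frobSq A + frobSq B - 2 * (Aᵀ * B).trace := by
  have htrace_comm : (Bᵀ * A).trace = (Aᵀ * B).trace := by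
    rw [← trace_transpose, transpose_mul, transpose_transpose]
  simp only [frobSq_eq_trace, transpose_sub, Matrix.sub_mul, Matrix.mul_sub, trace_sub,
    htrace_comm]
  ring

lemma frobSq_mul_of_mem_orthogonalGroup [DecidableEq n] (A : Matrix m n ℝ) {S : Matrix n n ℝ}
    (hS : S ∈ orthogonalGroup n ℝ) : frobSq (A * S) = frobSq A := by
  rw [frobSq_eq_trace, frobSq_eq_trace, transpose_mul, Matrix.mul_assoc, trace_mul_comm,
    Matrix.mul_assoc, Matrix.mul_assoc, (mem_orthogonalGroup_iff n ℝ).mp hS, Matrix.mul_one]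

lemma exists_mem_orthogonalGroup_frobSq_sub_mul_eq [DecidableEq n] (A B : Matrix m n ℝ) :
    ∃ S ∈ orthogonalGroup n ℝ,
      frobSq (A - B * S) = frobSq A + frobSq B - 2 * nuclearNorm (Aᵀ * B) := by
  obtain ⟨Q, hQ, hQC⟩ := exists_mem_unitaryGroup_mul_abs_eq (Aᵀ * B)
  have hQtQ : Qᵀ * Q = 1 := (mem_orthogonalGroup_iff' n ℝ).mp hQ
  have hS : Qᵀ ∈ orthogonalGroup n ℝ :=
    (mem_orthogonalGroup_iff n ℝ).mpr (by rwa [transpose_transpose])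
  have htrace : (Aᵀ * (B * Qᵀ)).trace = nuclearNorm (Aᵀ * B) :=
    calc (Aᵀ * (B * Qᵀ)).trace = (Q * CFC.abs (Aᵀ * B) * Qᵀ).trace := by
          rw [hQC, Matrix.mul_assoc]
      _ = nuclearNorm (Aᵀ * B) := by
          rw [trace_mul_comm, ← Matrix.mul_assoc, hQtQ, Matrix.one_mul, nuclearNorm_eq_trace_abs]
  refine ⟨Qᵀ, hS, ?_⟩
  rw [frobSq_sub, frobSq_mul_of_mem_orthogonalGroup _ hS, htrace]

end frobSq

section colBlock

variable (L M : Matrix (Fin N × Fin d) (Fin N × Fin d) ℝ)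

lemma frobSq_eq_sum_colBlock : frobSq L = ∑ t, frobSq (colBlock L t) := by
  simp only [frobSq, colBlock]
  conv_rhs => rw [Finset.sum_comm]
  exact Finset.sum_congr rfl fun p _ ↦ Fintype.sum_prod_type fun q ↦ L p q ^ 2

lemma mul_transpose_eq_sum_colBlock : L * Lᵀ = ∑ t, colBlock L t * (colBlock L t)ᵀ := by
  ext p q
  simp only [mul_apply, Matrix.sum_apply, transpose_apply, colBlock, Fintype.sum_prod_type]

lemma diagBlock_transpose_mul (t : Fin N) :
    diagBlock (Lᵀ * M) t = (colBlock L t)ᵀ * colBlock M t :=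
  rfl

lemma distAWsq_eq_sum_colBlock : distAWsq L M = ∑ t, (frobSq (colBlock L t) +
    frobSq (colBlock M t) - 2 * nuclearNorm ((colBlock L t)ᵀ * colBlock M t)) := by
  rw [distAWsq, frobSq_eq_sum_colBlock L, frobSq_eq_sum_colBlock M, Finset.mul_sum,
    ← Finset.sum_add_distrib, ← Finset.sum_sub_distrib]
  simp only [diagBlock_transpose_mul]

end colBlock

theorem distAW_eq_zero_same_cov_general (N d : ℕ)
    (L M : Matrix (Fin N × Fin d) (Fin N × Fin d) ℝ)
    (h : distAW L M = 0) :
    L * Lᵀ = M * Mᵀ := by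
  choose S hS hS_dist using fun t ↦
    exists_mem_orthogonalGroup_frobSq_sub_mul_eq (colBlock L t) (colBlock M t)
  have hsum : ∑ t, frobSq (colBlock L t - colBlock M t * S t) = 0 := by
    refine le_antisymm ?_ (Finset.sum_nonneg fun t _ ↦ frobSq_nonneg _)
    simpa only [hS_dist, ← distAWsq_eq_sum_colBlock] using Real.sqrt_eq_zero'.mp h
  have hblock : ∀ t, colBlock L t = colBlock M t * S t := fun t ↦
    sub_eq_zero.mp <| frobSq_eq_zero_iff.mp <|
      (Finset.sum_eq_zero_iff_of_nonneg fun t _ ↦ frobSq_nonneg _).mp hsum t (Finset.mem_univ t)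
  rw [mul_transpose_eq_sum_colBlock L, mul_transpose_eq_sum_colBlock M]
  refine Finset.sum_congr rfl fun t _ ↦ ?_
  rw [hblock t, transpose_mul, Matrix.mul_assoc, ← Matrix.mul_assoc (S t),
    (mem_orthogonalGroup_iff _ ℝ).mp (hS t), Matrix.one_mul]

/-- If `dist_AW(L,M) = 0` then the covariance matrices coincide: `LLᵀ = MMᵀ`. -/
theorem distAW_eq_zero_same_cov (N d : ℕ)
    (L M : Matrix (Fin N × Fin d) (Fin N × Fin d) ℝ)
    (hL : BlockLowerTri L) (hM : BlockLowerTri M)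
    (h : distAW L M = 0) :
    L * Lᵀ = M * Mᵀ :=
  distAW_eq_zero_same_cov_general N d L M h
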